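/- Let F : ℂⁿ → ℂ be real-differentiable at a point z. Then the normal space to the fibre of F at z, i.e. the orthogonal complement with respect to the real inner product ⟨v,w⟩_ℝ = Re Σ_k v_k·conj(w_k) of the kernel of fderiv ℝ F z in ℂⁿ, equals the set {μ·conj(∂F(z)) + conj(μ)·∂̄F(z) : μ ∈ ℂ}, where ∂F(z) and ∂̄F(z) are the Wirtinger gradient vectors of F at z. (Lemma 2.1.) -/

import Mathlib

/-!
Regard `L = fderiv ℝ F z` as an `ℝ`-linear map into `ℂ`, where `ℂ` carries the real inner
product `⟨a, b⟩ = Re (a · conj b)`. The normal space `(ker L)ᗮ` is then the range of the adjoint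
`L†`, and the expansion `L u = Σ_k (∂_k F · u_k + ∂̄_k F · conj u_k)` identifies
`L† μ = μ · conj (∂F) + conj μ · ∂̄F`.
-/

open Complex Filter Function Metric

noncomputable section

/-- `ℂⁿ` with its Euclidean (Hermitian) norm. -/
abbrev Cn (n : ℕ) := EuclideanSpace ℂ (Fin n)

/-- Real inner product `⟨v,w⟩_ℝ = Re Σ_k v_k·conj(w_k)` on `ℂⁿ ≅ ℝ^{2n}`. -/
def realInnerC {n : ℕ} (v w : Cn n) : ℝ := (∑ k : Fin n, v k * (starRingEnd ℂ) (w k)).re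

/-- Componentwise complex conjugate of a vector in `ℂⁿ`. -/
def conjVec {n : ℕ} (v : Cn n) : Cn n := WithLp.toLp 2 (fun k => starRingEnd ℂ (v k))

/-- The Wirtinger gradient `∂F(z)`, with components
`∂F/∂z_k(z) = ½(L(e_k) − i·L(i·e_k))` where `L = fderiv ℝ F z`. -/
def wirtD {n : ℕ} (F : Cn n → ℂ) (z : Cn n) : Cn n :=
  WithLp.toLp 2 (fun k => (1 / 2 : ℂ) * (fderiv ℝ F z (EuclideanSpace.single k 1)
    - Complex.I * fderiv ℝ F z (EuclideanSpace.single k Complex.I)))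

/-- The Wirtinger gradient `∂̄F(z)`, with components
`∂F/∂z̄_k(z) = ½(L(e_k) + i·L(i·e_k))` where `L = fderiv ℝ F z`. -/
def wirtDBar {n : ℕ} (F : Cn n → ℂ) (z : Cn n) : Cn n :=
  WithLp.toLp 2 (fun k => (1 / 2 : ℂ) * (fderiv ℝ F z (EuclideanSpace.single k 1)
    + Complex.I * fderiv ℝ F z (EuclideanSpace.single k Complex.I)))

lemma map_complex_smul {E F G : Type*} [AddCommGroup E] [Module ℂ E] [AddCommGroup F]
    [Module ℝ F] [FunLike G E F] [LinearMapClass G ℝ E F] (L : G) (c : ℂ) (x : E) :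
    L (c • x) = c.re • L x + c.im • L (I • x) := by
  conv_lhs => rw [← re_add_im c]
  rw [add_smul, mul_smul, Complex.coe_smul, Complex.coe_smul, map_add, map_smul, map_smul]

lemma EuclideanSpace.smul_single_one {𝕜 ι : Type*} [RCLike 𝕜] [DecidableEq ι] (i : ι) (c : 𝕜) :
    c • EuclideanSpace.single i (1 : 𝕜) = EuclideanSpace.single i c := by
  ext j
  by_cases h : j = i <;> simp [h]

theorem fderiv_apply_eq_sum_wirtinger {n : ℕ} (F : Cn n → ℂ) (z u : Cn n) :
    fderiv ℝ F z u
      = ∑ k, (wirtD F z k * u k + wirtDBar F z k * starRingEnd ℂ (u k)) := by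
  conv_lhs => rw [← (EuclideanSpace.basisFun (Fin n) ℂ).sum_repr u]
  rw [map_sum]
  refine Finset.sum_congr rfl fun k _ => ?_
  rw [EuclideanSpace.basisFun_repr, EuclideanSpace.basisFun_apply,
    map_complex_smul, EuclideanSpace.smul_single_one]
  simp only [wirtD, wirtDBar, PiLp.toLp_apply, real_smul]
  conv_rhs => rw [← re_add_im (u k)]
  simp only [map_add, map_mul, conj_ofReal, conj_I]
  linear_combination (fderiv ℝ F z (EuclideanSpace.single k I) * (u k).im) * I_sq

theorem realInnerC_eq_inner {n : ℕ} (v u : Cn n) : realInnerC v u = inner ℝ v u := by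
  simp only [realInnerC, PiLp.inner_apply, Complex.inner, re_sum]
  refine Finset.sum_congr rfl fun k _ => ?_
  rw [← conj_re, map_mul, conj_conj, mul_comm]

theorem inner_wirtinger_combination {n : ℕ} (F : Cn n → ℂ) (z : Cn n) (μ : ℂ) (u : Cn n) :
    inner ℝ (μ • conjVec (wirtD F z) + starRingEnd ℂ μ • wirtDBar F z) u
      = inner ℝ μ (fderiv ℝ F z u) := by
  rw [fderiv_apply_eq_sum_wirtinger, Complex.inner, Finset.sum_mul, re_sum, PiLp.inner_apply]
  refine Finset.sum_congr rfl fun k _ => ?_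
  simp only [Complex.inner, PiLp.add_apply, PiLp.smul_apply, conjVec, smul_eq_mul,
    mul_re, mul_im, add_re, add_im, conj_re, conj_im]
  ring

theorem adjoint_fderiv_apply {n : ℕ} (F : Cn n → ℂ) (z : Cn n) (μ : ℂ) :
    LinearMap.adjoint (fderiv ℝ F z : Cn n →ₗ[ℝ] ℂ) μ
      = μ • conjVec (wirtD F z) + starRingEnd ℂ μ • wirtDBar F z :=
  ext_inner_right ℝ fun u => by
    rw [LinearMap.adjoint_inner_left, inner_wirtinger_combination, ContinuousLinearMap.coe_coe]

theorem normal_space_eq_wirtinger_span_general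
    {n : ℕ} (F : Cn n → ℂ) (z : Cn n) :
    {v : Cn n | ∀ u : Cn n, fderiv ℝ F z u = 0 → realInnerC v u = 0}
      = {v : Cn n | ∃ μ : ℂ,
          v = μ • conjVec (wirtD F z) + (starRingEnd ℂ μ) • wirtDBar F z} := by
  have hnormal : {v : Cn n | ∀ u : Cn n, fderiv ℝ F z u = 0 → realInnerC v u = 0}
      = (LinearMap.ker (fderiv ℝ F z : Cn n →ₗ[ℝ] ℂ))ᗮ := by
    ext v
    simp [Submodule.mem_orthogonal', realInnerC_eq_inner]
  rw [hnormal, LinearMap.orthogonal_ker]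
  ext v
  simp [adjoint_fderiv_apply, eq_comm]

/-- **Lemma 2.1.**  For `F : ℂⁿ → ℂ` real-differentiable at `z`, the normal space to the
fibre of `F` at `z` — the orthogonal complement, for the real inner product, of the kernel
of `fderiv ℝ F z` — equals the set of vectors
`n_μ = μ·conj(∂F(z)) + conj(μ)·∂̄F(z)`, `μ ∈ ℂ`. -/
theorem normal_space_eq_wirtinger_span
    {n : ℕ} (F : Cn n → ℂ) (z : Cn n) (hF : DifferentiableAt ℝ F z) :
    {v : Cn n | ∀ u : Cn n, fderiv ℝ F z u = 0 → realInnerC v u = 0}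
      = {v : Cn n | ∃ μ : ℂ,
          v = μ • conjVec (wirtD F z) + (starRingEnd ℂ μ) • wirtDBar F z} :=
  normal_space_eq_wirtinger_span_general F z
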